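/- Let V, U be independent random vectors in R^n with i.i.d. standard Gaussian entries, and let f(x) = n^{-1/2} * sum_{i=1}^n V_i (U_i x)^2 for x in R. Then for any real x1, x2, x3, x4: E[f(x1) f(x2) f(x3) f(x4)] = 3(9 + 96/n) x1^2 x2^2 x3^2 x4^2. -/

import Mathlib

/-!
Since `f(x) = n^{-1/2} x² S` with `S = ∑ᵢ Vᵢ Uᵢ²`, the claim is `E[S⁴] = 27 n² + 288 n`.
The summands `Vᵢ Uᵢ²` are independent and centred, with `E[(V U²)²] = E[V²] E[U⁴] = 3` and
`E[(V U²)⁴] = E[V⁴] E[U⁸] = 3 · 105`; the Gaussian moments `E[x^{2k}] = (2k - 1)‼` come from the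
Gamma integral. For a sum of `n` independent centred variables with these moments,
`E[S⁴] = n E[X⁴] + 3 n (n - 1) E[X²]²`: adding one summand `X` and expanding `(X + S)⁴`
binomially, independence and `E[X] = E[S] = 0` leave only `E[S⁴] + 6 E[X²] E[S²] + E[X⁴]`.
-/

open MeasureTheory ProbabilityTheory Finset
open scoped Nat

lemma MeasureTheory.MemLp.integrable_pow_of_le {Ω : Type*} [MeasurableSpace Ω] {μ : Measure Ω}
    [IsFiniteMeasure μ] {f : Ω → ℝ} {p : ℕ} (hf : MemLp f p μ) {k : ℕ} (hk : k ≤ p) :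
    Integrable (fun ω => f ω ^ k) μ := by
  have := (hf.mono_exponent (mod_cast hk)).integrable_norm_pow'
  exact (integrable_norm_iff (hf.aestronglyMeasurable.pow k)).mp (by simpa [norm_pow] using this)

section GaussianMoments

open Real Set

theorem integral_pow_two_mul_gaussianReal (k : ℕ) :
    ∫ x, x ^ (2 * k) ∂gaussianReal 0 1 = ((2 * k - 1)‼ : ℕ) := by
  have hpdf (x : ℝ) :
      gaussianPDFReal 0 1 x = (√(2 * π))⁻¹ * exp (-(1 / 2) * |x| ^ (2 : ℝ)) := by
    simp [gaussianPDFReal, div_eq_inv_mul]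
  have hhalf : (1 / 2 : ℝ) ^ (-((2 * k : ℝ) + 1) / 2) = 2 ^ k * √2 := by
    rw [one_div, inv_rpow zero_le_two, ← rpow_neg zero_le_two, neg_div, neg_neg,
      show ((2 * k : ℝ) + 1) / 2 = k + 1 / 2 by ring, rpow_add two_pos, rpow_natCast,
      sqrt_eq_rpow]
  calc ∫ x, x ^ (2 * k) ∂gaussianReal 0 1
      = (√(2 * π))⁻¹ * ∫ x, |x| ^ ((2 * k : ℕ) : ℝ) * exp (-(1 / 2) * |x| ^ (2 : ℝ)) := by
        rw [integral_gaussianReal_eq_integral_smul one_ne_zero, ← integral_const_mul]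
        congr 1 with x
        rw [hpdf, rpow_natCast, (even_two_mul k).pow_abs, smul_eq_mul]
        ring
    _ = (√(2 * π))⁻¹ * (2 * ((1 / 2) ^ (-((2 * k : ℝ) + 1) / 2) * (1 / 2) *
          Gamma (((2 * k : ℝ) + 1) / 2))) := by
        rw [integral_comp_abs (f := fun y => y ^ ((2 * k : ℕ) : ℝ) * exp (-(1 / 2) * y ^ (2 : ℝ))),
          integral_rpow_mul_exp_neg_mul_rpow two_pos
            (by push_cast; linarith [k.cast_nonneg (α := ℝ)]) one_half_pos]
        push_cast
        rfl
    _ = ((2 * k - 1)‼ : ℕ) := by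
        rw [hhalf, show ((2 * k : ℝ) + 1) / 2 = k + 1 / 2 by ring, Gamma_nat_add_half,
          sqrt_mul zero_le_two]
        field_simp

lemma integrable_pow_gaussianReal (k : ℕ) : Integrable (fun x => x ^ k) (gaussianReal 0 1) :=
  (memLp_id_gaussianReal' (k : ENNReal) (ENNReal.natCast_ne_top k)).integrable_pow_of_le le_rfl

end GaussianMoments

section IndependentSums

variable {Ω : Type*} [MeasurableSpace Ω] {μ : Measure Ω}

lemma ProbabilityTheory.IndepFun.integral_add_pow [IsFiniteMeasure μ] {X Y : Ω → ℝ}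
    (hXY : IndepFun X Y μ) {n : ℕ} (hX : MemLp X n μ) (hY : MemLp Y n μ) :
    ∫ ω, (X ω + Y ω) ^ n ∂μ =
      ∑ k ∈ range (n + 1), (∫ ω, X ω ^ k ∂μ) * (∫ ω, Y ω ^ (n - k) ∂μ) * n.choose k := by
  simp_rw [add_pow]
  rw [integral_finsetSum]
  · refine sum_congr rfl fun k _ => ?_
    rw [integral_mul_const, hXY.integral_fun_comp_mul_comp (f := (· ^ k)) (g := (· ^ (n - k)))
      hX.aemeasurable hY.aemeasurable (by fun_prop) (by fun_prop)]
  · intro k hk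
    have hk : k ≤ n := Nat.lt_succ_iff.mp (mem_range.mp hk)
    exact ((hXY.comp (measurable_id.pow_const k) (measurable_id.pow_const (n - k))).integrable_mul
      (hX.integrable_pow_of_le hk) (hY.integrable_pow_of_le (n.sub_le k))).mul_const _

variable {ι : Type*} {X : ι → Ω → ℝ}

lemma ProbabilityTheory.iIndepFun.indepFun_fun_finsetSum_of_notMem (hX : iIndepFun X μ)
    (hmeas : ∀ i, Measurable (X i)) {s : Finset ι} {a : ι} (ha : a ∉ s) :
    IndepFun (X a) (fun ω => ∑ i ∈ s, X i ω) μ := by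
  have := (hX.indepFun_finsetSum_of_notMem hmeas ha).symm
  rwa [Finset.sum_fn] at this

variable [IsProbabilityMeasure μ]

theorem ProbabilityTheory.iIndepFun.integral_sum_sq (hX : iIndepFun X μ)
    (hmeas : ∀ i, Measurable (X i)) (hLp : ∀ i, MemLp (X i) 2 μ)
    (hmean : ∀ i, ∫ ω, X i ω ∂μ = 0) {v : ℝ} (h2 : ∀ i, ∫ ω, X i ω ^ 2 ∂μ = v)
    (s : Finset ι) : ∫ ω, (∑ i ∈ s, X i ω) ^ 2 ∂μ = #s * v := by
  classical
  induction s using Finset.induction_on with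
  | empty => simp
  | insert a s ha ih =>
    have hS : ∫ ω, ∑ i ∈ s, X i ω ∂μ = 0 := by
      rw [integral_finsetSum _ fun i _ => (hLp i).integrable one_le_two]
      simp [hmean]
    simp_rw [sum_insert ha]
    rw [(hX.indepFun_fun_finsetSum_of_notMem hmeas ha).integral_add_pow (mod_cast hLp a)
      (mod_cast memLp_finsetSum s fun i _ => hLp i)]
    simp only [sum_range_succ, range_one, sum_singleton, Nat.reduceAdd, pow_zero, pow_one,
      tsub_zero, tsub_self, Nat.add_one_sub_one, integral_const, probReal_univ, smul_eq_mul,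
      Nat.choose_zero_right, Nat.choose_succ_self_right, Nat.choose_self, Nat.cast_one,
      Nat.cast_ofNat, hmean, h2, ih, hS, card_insert_of_notMem ha, Nat.cast_add]
    ring

theorem ProbabilityTheory.iIndepFun.integral_sum_pow_four (hX : iIndepFun X μ)
    (hmeas : ∀ i, Measurable (X i)) (hLp : ∀ i, MemLp (X i) 4 μ)
    (hmean : ∀ i, ∫ ω, X i ω ∂μ = 0) {v m : ℝ} (h2 : ∀ i, ∫ ω, X i ω ^ 2 ∂μ = v)
    (h4 : ∀ i, ∫ ω, X i ω ^ 4 ∂μ = m) (s : Finset ι) :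
    ∫ ω, (∑ i ∈ s, X i ω) ^ 4 ∂μ = #s * m + 3 * #s * (#s - 1) * v ^ 2 := by
  classical
  induction s using Finset.induction_on with
  | empty => simp
  | insert a s ha ih =>
    have hLp2 i : MemLp (X i) 2 μ := (hLp i).mono_exponent (by norm_num)
    have hS : ∫ ω, ∑ i ∈ s, X i ω ∂μ = 0 := by
      rw [integral_finsetSum _ fun i _ => (hLp i).integrable (by norm_num)]
      simp [hmean]
    simp_rw [sum_insert ha]
    rw [(hX.indepFun_fun_finsetSum_of_notMem hmeas ha).integral_add_pow (mod_cast hLp a)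
      (mod_cast memLp_finsetSum s fun i _ => hLp i)]
    simp only [sum_range_succ, range_one, sum_singleton, Nat.reduceAdd, Nat.reduceSub, pow_zero,
      pow_one, tsub_zero, tsub_self, Nat.add_one_sub_one, integral_const, probReal_univ,
      smul_eq_mul, Nat.choose, Nat.cast_one, Nat.cast_ofNat, hmean, h2, h4, ih, hS,
      hX.integral_sum_sq hmeas hLp2 hmean h2, card_insert_of_notMem ha, Nat.cast_add]
    ring

end IndependentSums

theorem integral_mul_sq_pow_gaussianReal_prod (k : ℕ) :
    ∫ p : ℝ × ℝ, (p.1 * p.2 ^ 2) ^ k ∂(gaussianReal 0 1).prod (gaussianReal 0 1)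
      = (∫ x, x ^ k ∂gaussianReal 0 1) * ((2 * k - 1)‼ : ℕ) := by
  simp_rw [mul_pow, ← pow_mul]
  rw [integral_prod_mul (fun x : ℝ => x ^ k) (fun y : ℝ => y ^ (2 * k)),
    integral_pow_two_mul_gaussianReal]

lemma memLp_mul_sq_gaussianReal_prod :
    MemLp (fun p : ℝ × ℝ => p.1 * p.2 ^ 2) 4 ((gaussianReal 0 1).prod (gaussianReal 0 1)) := by
  refine (integrable_norm_rpow_iff (by fun_prop) (by norm_num) (by norm_num)).mp ?_
  refine ((integrable_pow_gaussianReal 4).mul_prod (integrable_pow_gaussianReal 8)).congr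
    (Filter.Eventually.of_forall fun p => ?_)
  simp only [Real.norm_eq_abs, ENNReal.toReal_ofNat]
  rw [Real.rpow_ofNat, Even.pow_abs (by decide)]
  ring

theorem integral_sum_mul_sq_pow_four_pi_gaussianReal (ι : Type*) [Fintype ι] :
    ∫ p : (ι → ℝ) × (ι → ℝ), (∑ i, p.1 i * p.2 i ^ 2) ^ 4
      ∂(Measure.pi fun _ => gaussianReal 0 1).prod (Measure.pi fun _ => gaussianReal 0 1)
      = 27 * (Fintype.card ι : ℝ) ^ 2 + 288 * Fintype.card ι := by
  rw [← (measurePreserving_arrowProdEquivProdArrow ℝ ℝ ι (fun _ => gaussianReal 0 1)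
    (fun _ => gaussianReal 0 1)).integral_comp']
  have hmom (i : ι) (k : ℕ) : ∫ ω : ι → ℝ × ℝ, ((ω i).1 * (ω i).2 ^ 2) ^ k
      ∂Measure.pi (fun _ => (gaussianReal 0 1).prod (gaussianReal 0 1))
      = (∫ x, x ^ k ∂gaussianReal 0 1) * ((2 * k - 1)‼ : ℕ) := by
    rw [integral_comp_eval (X := fun _ : ι => ℝ × ℝ) (f := fun p : ℝ × ℝ => (p.1 * p.2 ^ 2) ^ k)
      (by fun_prop), integral_mul_sq_pow_gaussianReal_prod]
  have h1 := integral_pow_two_mul_gaussianReal 1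
  have h2 := integral_pow_two_mul_gaussianReal 2
  have := iIndepFun.integral_sum_pow_four (X := fun i (ω : ι → ℝ × ℝ) => (ω i).1 * (ω i).2 ^ 2)
    (μ := Measure.pi fun _ => (gaussianReal 0 1).prod (gaussianReal 0 1))
    (iIndepFun_pi (X := fun _ (q : ℝ × ℝ) => q.1 * q.2 ^ 2) fun _ => by fun_prop)
    (fun _ => by fun_prop)
    (fun i => memLp_mul_sq_gaussianReal_prod.comp_measurePreserving (measurePreserving_eval _ i))
    (fun i => by simpa using hmom i 1) (v := 3) (m := 315)
    (fun i => by rw [hmom, h1]; norm_num [Nat.doubleFactorial])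
    (fun i => by rw [hmom, h2]; norm_num [Nat.doubleFactorial]) univ
  rw [card_univ] at this
  exact this.trans (by ring)

/-- `E[f(x₁)f(x₂)f(x₃)f(x₄)] = 3(9 + 96/n) x₁²x₂²x₃²x₄²` for the width-`n`
one-hidden-layer network `f(x) = n^{-1/2} ∑ i, V i * (U i * x)^2` with
independent i.i.d. standard Gaussian weight vectors `V, U`. -/
theorem stmt_1 (n : ℕ) (hn : 1 ≤ n)
    (μ : Measure ((Fin n → ℝ) × (Fin n → ℝ)))
    (hμ : μ = (Measure.pi fun _ : Fin n => gaussianReal 0 1).prod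
      (Measure.pi fun _ : Fin n => gaussianReal 0 1))
    (f : ℝ → (Fin n → ℝ) × (Fin n → ℝ) → ℝ)
    (hf : ∀ x p, f x p = (Real.sqrt n)⁻¹ * ∑ i, p.1 i * (p.2 i * x) ^ 2)
    (x₁ x₂ x₃ x₄ : ℝ) :
    (∫ p, f x₁ p * f x₂ p * f x₃ p * f x₄ p ∂μ)
      = 3 * (9 + 96 / (n : ℝ)) * x₁ ^ 2 * x₂ ^ 2 * x₃ ^ 2 * x₄ ^ 2 := by
  subst hμ
  have hn0 : (n : ℝ) ≠ 0 := Nat.cast_ne_zero.mpr (Nat.one_le_iff_ne_zero.mp hn)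
  have hsqrt : (Real.sqrt n)⁻¹ ^ 4 = ((n : ℝ) ^ 2)⁻¹ := by
    rw [inv_pow, show 4 = 2 * 2 from rfl, pow_mul, Real.sq_sqrt (Nat.cast_nonneg n)]
  have hfx (x : ℝ) (p : (Fin n → ℝ) × (Fin n → ℝ)) :
      f x p = (Real.sqrt n)⁻¹ * x ^ 2 * ∑ i, p.1 i * p.2 i ^ 2 := by
    rw [hf, mul_assoc, mul_sum _ _ (x ^ 2)]
    exact congrArg _ (sum_congr rfl fun i _ => by ring)
  have hprod p : f x₁ p * f x₂ p * f x₃ p * f x₄ p =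
      ((n : ℝ) ^ 2)⁻¹ * (x₁ ^ 2 * x₂ ^ 2 * x₃ ^ 2 * x₄ ^ 2) * (∑ i, p.1 i * p.2 i ^ 2) ^ 4 := by
    rw [hfx, hfx, hfx, hfx, ← hsqrt]
    ring
  simp_rw [hprod]
  rw [integral_const_mul, integral_sum_mul_sq_pow_four_pi_gaussianReal, Fintype.card_fin]
  field_simp
  ring
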